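/- Every coarsely discrete coarse space (X, E) is δ-rigid: if E' is a coarse structure on X inducing the same closeness relation as E, then E' = E. -/
import Mathlib


open Set

/-- A coarse structure (ballean) on a set `X`. -/
structure CoarseStruct (X : Type*) where
  sets : Set (Set (X × X))
  diagonal_mem : Set.diagonal X ∈ sets
  diagonal_subset : ∀ E ∈ sets, Set.diagonal X ⊆ E
  comp_mem : ∀ E ∈ sets, ∀ F ∈ sets,
    {p : X × X | ∃ z, (p.1, z) ∈ E ∧ (z, p.2) ∈ F} ∈ sets
  inv_mem : ∀ E ∈ sets, {p : X × X | (p.2, p.1) ∈ E} ∈ sets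
  subset_mem : ∀ E ∈ sets, ∀ E' : Set (X × X),
    Set.diagonal X ⊆ E' → E' ⊆ E → E' ∈ sets
  cover : ∀ p : X × X, ∃ E ∈ sets, p ∈ E

namespace CoarseStruct

variable {X : Type*}

/-- The ball `E[A]` of radius `E` around `A`. -/
def ball (E : Set (X × X)) (A : Set X) : Set X := {y | ∃ a ∈ A, (a, y) ∈ E}

/-- A set is bounded if it is contained in a ball around a point. -/
def IsBounded (C : CoarseStruct X) (B : Set X) : Prop :=
  ∃ E ∈ C.sets, ∃ x : X, B ⊆ ball E {x}

/-- Closeness: `A δ B`. -/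
def Close (C : CoarseStruct X) (A B : Set X) : Prop :=
  ∃ E ∈ C.sets, A ⊆ ball E B ∧ B ⊆ ball E A

/-- Linkness: `A λ B`. -/
def Linked (C : CoarseStruct X) (A B : Set X) : Prop :=
  (C.IsBounded A ∧ C.IsBounded B) ∨
  ∃ A' B' : Set X, A' ⊆ A ∧ B' ⊆ B ∧ ¬C.IsBounded A' ∧ ¬C.IsBounded B' ∧ C.Close A' B'

def LambdaEquiv (C C' : CoarseStruct X) : Prop :=
  ∀ A B : Set X, C.Linked A B ↔ C'.Linked A B

def DeltaEquiv (C C' : CoarseStruct X) : Prop :=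
  ∀ A B : Set X, C.Close A B ↔ C'.Close A B

def Discrete (C : CoarseStruct X) : Prop :=
  ∀ E ∈ C.sets, ∃ B : Set X, C.IsBounded B ∧ ∀ x ∉ B, ball E {x} = {x}

def Large (C : CoarseStruct X) (Y : Set X) : Prop :=
  ∃ E ∈ C.sets, ball E Y = Set.univ

/-- The subballean on `Y` is discrete. -/
def DiscreteOn (C : CoarseStruct X) (Y : Set X) : Prop :=
  ∀ E ∈ C.sets, ∃ B : Set X, C.IsBounded B ∧ ∀ y ∈ Y \ B, ball E {y} ∩ Y = {y}

def CoarselyDiscrete (C : CoarseStruct X) : Prop :=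
  ∃ Y : Set X, C.Large Y ∧ C.DiscreteOn Y

def LambdaRigid (C : CoarseStruct X) : Prop :=
  ∀ C' : CoarseStruct X, LambdaEquiv C C' → C' = C

def DeltaRigid (C : CoarseStruct X) : Prop :=
  ∀ C' : CoarseStruct X, DeltaEquiv C C' → C' = C

def IsBase (C : CoarseStruct X) (B : Set (Set (X × X))) : Prop :=
  B ⊆ C.sets ∧ ∀ E ∈ C.sets, ∃ E' ∈ B, E ⊆ E'

/-- Metrizable: the coarse structure has a countable base. -/
def Metrizable (C : CoarseStruct X) : Prop :=
  ∃ B : Set (Set (X × X)), B.Countable ∧ C.IsBase B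

/-- Ordinal: the coarse structure has a base linearly ordered by inclusion. -/
def Ordinal (C : CoarseStruct X) : Prop :=
  ∃ B : Set (Set (X × X)), C.IsBase B ∧ IsChain (· ⊆ ·) B

def MacroUniform (C : CoarseStruct X) (f : X → ℝ) : Prop :=
  ∀ E ∈ C.sets, ∃ r : ℝ, 0 < r ∧
    ∀ x : X, ∀ y ∈ ball E {x}, ∀ z ∈ ball E {x}, |f y - f z| ≤ r

def Submetrizable (C : CoarseStruct X) : Prop :=
  ¬C.IsBounded Set.univ ∧ ∃ C'' : CoarseStruct X,
    C.sets ⊆ C''.sets ∧ ¬C''.IsBounded Set.univ ∧ C''.Metrizable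

def SlowlyOscillating (C : CoarseStruct X) (f : X → ℝ) : Prop :=
  ∀ E ∈ C.sets, ∀ ε : ℝ, 0 < ε → ∃ B : Set X, C.IsBounded B ∧
    ∀ x ∉ B, ∀ y ∈ ball E {x}, ∀ z ∈ ball E {x}, |f y - f z| < ε

/-- The entourage `H_{(E,Φ)}`: `H[x] = {x}` for `x ∈ Φ` and `H[x] = E[x] \ Φ` for `x ∉ Φ`. -/
def EPhiBase (E : Set (X × X)) (Φ : Set X) : Set (X × X) :=
  {p | (p.1 ∈ Φ ∧ p.1 = p.2) ∨ (p.1 ∉ Φ ∧ p.2 ∉ Φ ∧ (p.1, p.2) ∈ E)}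

/-- The family of entourages of the coarse structure `E_φ` with base `{H_{(E,Φ)}}`. -/
def EPhiSets (C : CoarseStruct X) (φ : Filter X) : Set (Set (X × X)) :=
  {E' | Set.diagonal X ⊆ E' ∧ ∃ E ∈ C.sets, ∃ Φ ∈ φ, E' ⊆ EPhiBase E Φ}

/-- The set `B♯` of ultrafilters containing the complement of every bounded set. -/
def Bsharp (C : CoarseStruct X) : Set (Ultrafilter X) :=
  {p | ∀ B : Set X, C.IsBounded B → Bᶜ ∈ p}

/-- Parallelity of ultrafilters: `p ∥ q`. -/
def Parallel (C : CoarseStruct X) (p q : Ultrafilter X) : Prop :=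
  ∃ E ∈ C.sets, ∀ P ∈ p, ball E P ∈ q

def AsympDisjoint (C : CoarseStruct X) (A B : Set X) : Prop :=
  ∀ E ∈ C.sets, C.IsBounded (ball E A ∩ ball E B)

def AsympNbhd (C : CoarseStruct X) (A U : Set X) : Prop :=
  ∀ E ∈ C.sets, C.IsBounded (ball E A \ U)

def Normal (C : CoarseStruct X) : Prop :=
  ∀ A B : Set X, C.AsympDisjoint A B →
    ∃ U V : Set X, C.AsympNbhd A U ∧ C.AsympNbhd B V ∧ Disjoint U V

end CoarseStruct

namespace CoarseStruct

variable {X : Type*}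

/-- Composition of entourages. -/
def cmp (E F : Set (X × X)) : Set (X × X) := {p : X × X | ∃ z, (p.1, z) ∈ E ∧ (z, p.2) ∈ F}

/-- Inverse of an entourage. -/
def ivn (E : Set (X × X)) : Set (X × X) := {p : X × X | (p.2, p.1) ∈ E}

lemma cmp_mem (C : CoarseStruct X) {E F : Set (X × X)} (hE : E ∈ C.sets) (hF : F ∈ C.sets) :
    cmp E F ∈ C.sets := C.comp_mem E hE F hF

lemma ivn_mem (C : CoarseStruct X) {E : Set (X × X)} (hE : E ∈ C.sets) :
    ivn E ∈ C.sets := C.inv_mem E hE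

lemma union_mem (C : CoarseStruct X) {E F : Set (X × X)} (hE : E ∈ C.sets) (hF : F ∈ C.sets) :
    E ∪ F ∈ C.sets := by
  refine C.subset_mem (cmp E F) (C.cmp_mem hE hF) _ ?_ ?_
  · intro p hp
    exact Or.inl (C.diagonal_subset E hE hp)
  · rintro ⟨x, y⟩ (h | h)
    · exact ⟨y, h, C.diagonal_subset F hF rfl⟩
    · exact ⟨x, C.diagonal_subset E hE rfl, h⟩

lemma ball_mono {E E' : Set (X × X)} {A A' : Set X} (hE : E ⊆ E') (hA : A ⊆ A') :
    ball E A ⊆ ball E' A' := by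
  rintro y ⟨a, ha, h⟩
  exact ⟨a, hA ha, hE h⟩

lemma subset_ball {E : Set (X × X)} (hE : Set.diagonal X ⊆ E) (A : Set X) : A ⊆ ball E A :=
  fun a ha => ⟨a, ha, hE rfl⟩

lemma ball_cmp (E F : Set (X × X)) (A : Set X) : ball (cmp E F) A = ball F (ball E A) := by
  ext y
  constructor
  · rintro ⟨a, ha, z, h1, h2⟩
    exact ⟨z, ⟨a, ha, h1⟩, h2⟩
  · rintro ⟨z, ⟨a, ha, h1⟩, h2⟩
    exact ⟨a, ha, z, h1, h2⟩

lemma isBounded_mono (C : CoarseStruct X) {A B : Set X} (h : A ⊆ B) (hB : C.IsBounded B) :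
    C.IsBounded A := by
  obtain ⟨E, hE, x, hx⟩ := hB
  exact ⟨E, hE, x, h.trans hx⟩

lemma isBounded_ball (C : CoarseStruct X) {B : Set X} {E : Set (X × X)}
    (hB : C.IsBounded B) (hE : E ∈ C.sets) : C.IsBounded (ball E B) := by
  obtain ⟨F, hF, x, hx⟩ := hB
  refine ⟨cmp F E, C.cmp_mem hF hE, x, ?_⟩
  rw [ball_cmp]
  exact ball_mono subset_rfl hx

lemma isBounded_union (C : CoarseStruct X) {A B : Set X}
    (hA : C.IsBounded A) (hB : C.IsBounded B) : C.IsBounded (A ∪ B) := by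
  obtain ⟨E, hE, x, hx⟩ := hA
  obtain ⟨F, hF, y, hy⟩ := hB
  obtain ⟨G, hG, hxy⟩ := C.cover (x, y)
  refine ⟨E ∪ cmp G F, C.union_mem hE (C.cmp_mem hG hF), x, ?_⟩
  rintro b (hb | hb)
  · obtain ⟨a, ha, h⟩ := hx hb
    exact ⟨a, ha, Or.inl h⟩
  · obtain ⟨a, ha, h⟩ := hy hb
    rcases ha with rfl
    exact ⟨x, rfl, Or.inr ⟨a, hxy, h⟩⟩

lemma close_symm {C : CoarseStruct X} {A B : Set X} (h : C.Close A B) : C.Close B A := by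
  obtain ⟨E, hE, h1, h2⟩ := h
  exact ⟨E, hE, h2, h1⟩

lemma close_trans {C : CoarseStruct X} {A B D : Set X}
    (h1 : C.Close A B) (h2 : C.Close B D) : C.Close A D := by
  obtain ⟨E, hE, hAB, hBA⟩ := h1
  obtain ⟨F, hF, hBD, hDB⟩ := h2
  refine ⟨cmp F E ∪ cmp E F, C.union_mem (C.cmp_mem hF hE) (C.cmp_mem hE hF), ?_, ?_⟩
  · intro a ha
    have : a ∈ ball E (ball F D) := ball_mono subset_rfl hBD (hAB ha)
    rw [← ball_cmp] at this
    exact ball_mono subset_union_left subset_rfl this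
  · intro d hd
    have : d ∈ ball F (ball E A) := ball_mono subset_rfl hBA (hDB hd)
    rw [← ball_cmp] at this
    exact ball_mono subset_union_right subset_rfl this

lemma close_images {C : CoarseStruct X} {E : Set (X × X)} (hE : E ∈ C.sets)
    {ι : Type*} (p q : ι → X) (S : Set ι) (h : ∀ i ∈ S, (p i, q i) ∈ E) :
    C.Close (p '' S) (q '' S) := by
  refine ⟨E ∪ ivn E, C.union_mem hE (C.ivn_mem hE), ?_, ?_⟩
  · rintro _ ⟨i, hi, rfl⟩
    exact ⟨q i, ⟨i, hi, rfl⟩, Or.inr (h i hi)⟩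
  · rintro _ ⟨i, hi, rfl⟩
    exact ⟨p i, ⟨i, hi, rfl⟩, Or.inl (h i hi)⟩

lemma isBounded_of_close {C : CoarseStruct X} {A B : Set X}
    (h : C.Close A B) (hA : C.IsBounded A) : C.IsBounded B := by
  obtain ⟨E, hE, _, hBA⟩ := h
  exact C.isBounded_mono hBA (C.isBounded_ball hA hE)

lemma isBounded_of_equiv {C C' : CoarseStruct X} (hδ : DeltaEquiv C C') {B : Set X}
    (hB : C.IsBounded B) : C'.IsBounded B := by
  obtain ⟨E, hE, x, hx⟩ := hB
  rcases B.eq_empty_or_nonempty with rfl | ⟨b, hb⟩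
  · exact ⟨Set.diagonal X, C'.diagonal_mem, x, empty_subset _⟩
  · have hcl : C.Close B {x} := by
      refine ⟨E ∪ ivn E, C.union_mem hE (C.ivn_mem hE), ?_, ?_⟩
      · exact hx.trans (ball_mono subset_union_left subset_rfl)
      · rintro y rfl
        obtain ⟨a, ha, hax⟩ := hx hb
        rcases ha with rfl
        exact ⟨b, hb, Or.inr hax⟩
    obtain ⟨E', hE', h1, _⟩ := (hδ B {x}).mp hcl
    exact ⟨E', hE', x, h1⟩

lemma deltaEquiv_symm {C C' : CoarseStruct X} (hδ : DeltaEquiv C C') : DeltaEquiv C' C :=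
  fun A B => (hδ A B).symm

/-- In a set on which `C` is discrete, disjoint close subsets are bounded. -/
lemma isBounded_of_close_disjoint {C : CoarseStruct X} {Y A B : Set X}
    (hY : C.DiscreteOn Y) (hA : A ⊆ Y) (hB : B ⊆ Y) (hAB : A ∩ B = ∅)
    (h : C.Close A B) : C.IsBounded A := by
  obtain ⟨E, hE, hABE, _⟩ := h
  obtain ⟨D, hD, hDprop⟩ := hY E hE
  refine C.isBounded_mono ?_ (C.isBounded_ball hD hE)
  intro a ha
  obtain ⟨b, hbB, hba⟩ := hABE ha
  by_cases hbD : b ∈ D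
  · exact ⟨b, hbD, hba⟩
  · have hb' : b ∈ Y \ D := ⟨hB hbB, hbD⟩
    have : a ∈ ball E {b} ∩ Y := ⟨⟨b, rfl, hba⟩, hA ha⟩
    rw [hDprop b hb'] at this
    have hab : a = b := this
    subst hab
    have hmem : a ∈ A ∩ B := ⟨ha, hbB⟩
    rw [hAB] at hmem
    exact hmem.elim

/-- A maximal independent set for a fixed-point-free map. -/
lemma exists_maximal_independent (f : X → X) (T : Set X) (hf : ∀ t ∈ T, f t ≠ t) :
    ∃ A ⊆ T, (∀ a ∈ A, f a ∉ A) ∧ ∀ t ∈ T, t ∈ A ∨ f t ∈ A ∨ t ∈ f '' A := by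
  set 𝒮 : Set (Set X) := {A | A ⊆ T ∧ ∀ a ∈ A, f a ∉ A} with h𝒮
  have hchain : ∀ c ⊆ 𝒮, IsChain (· ⊆ ·) c → ∃ ub ∈ 𝒮, ∀ s ∈ c, s ⊆ ub := by
    intro c hc hchain
    refine ⟨⋃₀ c, ⟨?_, ?_⟩, fun s hs => subset_sUnion_of_mem hs⟩
    · exact sUnion_subset fun s hs => (hc hs).1
    · rintro a ⟨s, hs, has⟩ ⟨s', hs', hfas'⟩
      rcases hchain.total hs hs' with hss | hss
      · exact (hc hs').2 a (hss has) hfas'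
      · exact (hc hs).2 a has (hss hfas')
  obtain ⟨A, hAmax⟩ := zorn_subset 𝒮 hchain
  have hA𝒮 : A ∈ 𝒮 := hAmax.1
  refine ⟨A, hA𝒮.1, hA𝒮.2, fun t ht => ?_⟩
  by_contra hcon
  push_neg at hcon
  obtain ⟨htA, hftA, htfA⟩ := hcon
  have hmem : insert t A ∈ 𝒮 := by
    constructor
    · exact insert_subset ht hA𝒮.1
    · rintro a (rfl | ha) hfa
      · rcases hfa with hfa | hfa
        · exact hf a ht hfa
        · exact hftA hfa
      · rcases hfa with hfa | hfa
        · exact htfA ⟨a, ha, hfa⟩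
        · exact hA𝒮.2 a ha hfa
  exact htA (hAmax.2 hmem (subset_insert t A) (mem_insert t A))

lemma square_mem (C : CoarseStruct X) {B : Set X} (hB : C.IsBounded B) :
    Set.diagonal X ∪ B ×ˢ B ∈ C.sets := by
  obtain ⟨F, hF, x, hx⟩ := hB
  refine C.subset_mem (cmp (ivn F) F) (C.cmp_mem (C.ivn_mem hF) hF) _ subset_union_left ?_
  rintro ⟨a, b⟩ (hab | ⟨ha, hb⟩)
  · rcases hab with (rfl : a = b)
    exact ⟨a, C.diagonal_subset F hF rfl, C.diagonal_subset F hF rfl⟩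
  · obtain ⟨c, hc, hca⟩ := hx ha
    obtain ⟨d, hd, hdb⟩ := hx hb
    rw [show c = x from hc] at hca
    rw [show d = x from hd] at hdb
    exact ⟨x, hca, hdb⟩

/-- The key directional lemma. -/
lemma sets_subset_of_coarselyDiscrete {C C' : CoarseStruct X}
    (h : C.CoarselyDiscrete) (hδ : DeltaEquiv C C') : C'.sets ⊆ C.sets := by
  obtain ⟨Y, ⟨E_Y, hEY, hlarge⟩, hdisc⟩ := h
  intro H hH
  set H₀ : Set (X × X) := H ∪ ivn H with hH₀def
  have hH₀ : H₀ ∈ C'.sets := C'.union_mem hH (C'.ivn_mem hH)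
  -- choose a retraction to Y
  have hgex : ∀ x : X, ∃ y, y ∈ Y ∧ (y, x) ∈ E_Y := by
    intro x
    have hx : x ∈ ball E_Y Y := hlarge ▸ mem_univ x
    obtain ⟨y, hy, hyx⟩ := hx
    exact ⟨y, hy, hyx⟩
  choose g hgY hgE using hgex
  set S : Set (X × X) := (fun p : X × X => (g p.1, g p.2)) '' H₀ with hSdef
  set T : Set X := {y | ∃ y', (y, y') ∈ S ∧ y' ≠ y} with hTdef
  have hTY : T ⊆ Y := by
    rintro y ⟨y', ⟨p, _, hp⟩, _⟩
    have : g p.1 = y := congrArg Prod.fst hp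
    exact this ▸ hgY p.1
  -- choose partners
  have hfex : ∀ y : X, ∃ x x', y ∈ T → ((x, x') ∈ H₀ ∧ g x = y ∧ g x' ≠ y) := by
    intro y
    by_cases hy : y ∈ T
    · obtain ⟨y', ⟨p, hpH, hp⟩, hy'⟩ := hy
      refine ⟨p.1, p.2, fun _ => ⟨hpH, congrArg Prod.fst hp, ?_⟩⟩
      have h2 : g p.2 = y' := congrArg Prod.snd hp
      exact h2 ▸ hy'
    · exact ⟨y, y, fun h => absurd h hy⟩
  choose u u' hu using hfex
  set f : X → X := fun y => g (u' y) with hfdef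
  have hff : ∀ t ∈ T, f t ≠ t := fun t ht => (hu t ht).2.2
  have hfY : ∀ t, f t ∈ Y := fun t => hgY (u' t)
  -- every subset of T is close to its f-image
  have hcl : ∀ A ⊆ T, C.Close A (f '' A) := by
    intro A hA
    have c1 : C.Close (id '' A) (u '' A) :=
      close_images hEY id u A (fun a ha => by
        have h1 : g (u a) = a := (hu a (hA ha)).2.1
        have h2 := hgE (u a)
        rw [h1] at h2
        exact h2)
    have c2 : C'.Close (u '' A) (u' '' A) :=
      close_images hH₀ u u' A (fun a ha => (hu a (hA ha)).1)
    have c3 : C.Close (f '' A) (u' '' A) :=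
      close_images hEY f u' A (fun a _ => hgE (u' a))
    rw [image_id] at c1
    exact close_trans (close_trans c1 ((hδ _ _).mpr c2)) (close_symm c3)
  -- T is bounded
  have hTbd : C.IsBounded T := by
    by_contra hT
    obtain ⟨A, hAT, hAind, hAmax⟩ := exists_maximal_independent f T hff
    have hkey : ∀ B ⊆ T, B ∩ f '' B = ∅ → C.IsBounded B := by
      intro B hB hdisj
      exact isBounded_of_close_disjoint hdisc (hB.trans hTY)
        (by rintro _ ⟨b, _, rfl⟩; exact hfY b) hdisj (hcl B hB)
    have hAbd : C.IsBounded A := by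
      refine hkey A hAT ?_
      ext a
      simp only [mem_inter_iff, mem_empty_iff_false, iff_false]
      rintro ⟨haA, a', ha'A, rfl⟩
      exact hAind a' ha'A haA
    have hfAbd : C.IsBounded (f '' A) := isBounded_of_close (hcl A hAT) hAbd
    set B2 : Set X := {t ∈ T | f t ∈ A} \ A with hB2def
    have hB2bd : C.IsBounded B2 := by
      refine hkey B2 (fun t ht => ht.1.1) ?_
      ext a
      simp only [mem_inter_iff, mem_empty_iff_false, iff_false]
      rintro ⟨haB2, a', ha', rfl⟩
      exact haB2.2 ha'.1.2
    have hTsub : T ⊆ A ∪ f '' A ∪ B2 := by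
      intro t ht
      rcases hAmax t ht with h1 | h1 | h1
      · exact Or.inl (Or.inl h1)
      · by_cases htA : t ∈ A
        · exact Or.inl (Or.inl htA)
        · exact Or.inr ⟨⟨ht, h1⟩, htA⟩
      · exact Or.inl (Or.inr h1)
    exact hT (C.isBounded_mono hTsub
      (C.isBounded_union (C.isBounded_union hAbd hfAbd) hB2bd))
  -- the ball of S around T is bounded
  have hSTbd : C.IsBounded (ball S T) := by
    have h1 : C.IsBounded (ball E_Y T) := C.isBounded_ball hTbd hEY
    have h2 : C'.IsBounded (ball H₀ (ball E_Y T)) :=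
      C'.isBounded_ball (isBounded_of_equiv hδ h1) hH₀
    have h3 : C.IsBounded (ball (ivn E_Y) (ball H₀ (ball E_Y T))) :=
      C.isBounded_ball (isBounded_of_equiv (deltaEquiv_symm hδ) h2) (C.ivn_mem hEY)
    refine C.isBounded_mono ?_ h3
    rintro y' ⟨y, hyT, ⟨p, hpH, hp⟩⟩
    have h1 : g p.1 = y := congrArg Prod.fst hp
    have h2 : g p.2 = y' := congrArg Prod.snd hp
    refine ⟨p.2, ⟨p.1, ⟨y, hyT, h1 ▸ hgE p.1⟩, hpH⟩, ?_⟩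
    show (y', p.2) ∈ E_Y
    exact h2 ▸ hgE p.2
  -- assemble
  have hBbd : C.IsBounded (T ∪ ball S T) := C.isBounded_union hTbd hSTbd
  set B : Set X := T ∪ ball S T with hBdef
  have hS' : Set.diagonal X ∪ S ∈ C.sets := by
    refine C.subset_mem _ (C.square_mem hBbd) _ subset_union_left ?_
    rintro ⟨y, y'⟩ (hd | hS)
    · exact Or.inl hd
    · by_cases hyy : y' = y
      · exact Or.inl (show y = y' from hyy.symm)
      · exact Or.inr ⟨Or.inl ⟨y', hS, hyy⟩, Or.inr ⟨y, ⟨y', hS, hyy⟩, hS⟩⟩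
  have hG : cmp (ivn E_Y) (cmp (Set.diagonal X ∪ S) E_Y) ∈ C.sets :=
    C.cmp_mem (C.ivn_mem hEY) (C.cmp_mem hS' hEY)
  refine C.subset_mem _ hG H (C'.diagonal_subset H hH) ?_
  rintro ⟨x, x'⟩ hx
  have hx0 : (x, x') ∈ H₀ := Or.inl hx
  exact ⟨g x, hgE x, g x', Or.inr ⟨(x, x'), hx0, rfl⟩, hgE x'⟩

lemma eq_of_sets_eq {C C' : CoarseStruct X} (h : C.sets = C'.sets) : C = C' := by
  cases C; cases C'
  simp only [mk.injEq]
  exact h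

end CoarseStruct

/-- Every coarsely discrete coarse space is δ-rigid. -/
theorem coarselyDiscrete_deltaRigid {X : Type*} (C : CoarseStruct X)
    (h : C.CoarselyDiscrete) : C.DeltaRigid := by
  intro C' hδ
  have h1 : C'.sets ⊆ C.sets := CoarseStruct.sets_subset_of_coarselyDiscrete h hδ
  obtain ⟨Y, ⟨E_Y, hEY, hlarge⟩, hdisc⟩ := h
  -- C' is also coarsely discrete
  have hlarge' : C'.Large Y := by
    have hcl : C.Close Y Set.univ := by
      refine ⟨E_Y ∪ CoarseStruct.ivn E_Y, C.union_mem hEY (C.ivn_mem hEY), ?_, ?_⟩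
      · exact (CoarseStruct.subset_ball
          (fun p hp => Or.inl (C.diagonal_subset E_Y hEY hp)) Y).trans
          (CoarseStruct.ball_mono subset_rfl (subset_univ Y))
      · intro x _
        have hx : x ∈ CoarseStruct.ball E_Y Y := hlarge ▸ mem_univ x
        exact CoarseStruct.ball_mono subset_union_left subset_rfl hx
    obtain ⟨E', hE', _, h2⟩ := (hδ Y Set.univ).mp hcl
    exact ⟨E', hE', subset_antisymm (subset_univ _) h2⟩
  have hdisc' : C'.DiscreteOn Y := by
    intro E hE
    obtain ⟨B, hBbd, hBprop⟩ := hdisc E (h1 hE)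
    exact ⟨B, CoarseStruct.isBounded_of_equiv hδ hBbd, hBprop⟩
  have h2 : C.sets ⊆ C'.sets :=
    CoarseStruct.sets_subset_of_coarselyDiscrete ⟨Y, hlarge', hdisc'⟩
      (CoarseStruct.deltaEquiv_symm hδ)
  exact CoarseStruct.eq_of_sets_eq (subset_antisymm h1 h2)
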